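/- If the general consequence relation ⊢_L is one-step sound (and Ax(𝔸) is sound and complete), then ⊢_L is sound with respect to the semantic consequence relation ⊩: for every finite Γ ∪ {φ} ⊆ ML, Γ ⊢_L φ implies Γ ⊩ φ. -/

import Mathlib

/-!
A derivation in `⊢_L` is a finite tree of rule applications, so it is already a derivation
in `⊢_{L_n}` for some `n`, and every formula in it has rank at most `n`. One-step soundness
and induction make every `⊢_{L_n}` sound for `⊩_n`. Finally, each `T`-model `⟨S, σ_V⟩`
maps into the terminal sequence by `σ_n : S → T_P^n 1̃`, and by naturality of the predicate
liftings the semantics of a formula of rank `≤ n` at `s` is its step-`n` semantics at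
`σ_n s`; so `Γ ⊩_n φ` yields `Γ ⊩ φ`.
-/

open CategoryTheory

/-- A commutative integral FL-algebra (residuated lattice): a bounded lattice with a
commutative monoid operation `*` whose unit `1` is the top element, together with a
residuated implication `himp` satisfying `a * b ≤ c ↔ b ≤ himp a c`. -/
class FLAlgebra (A : Type) extends Lattice A, BoundedOrder A, CommMonoid A where
  himp : A → A → A
  residuation : ∀ a b c : A, a * b ≤ c ↔ b ≤ himp a c
  one_eq_top : (1 : A) = ⊤

/-- A (unary) predicate lifting for a `Set`-endofunctor `T` with truth values in `A`:
a natural transformation `Hom(-,A) ⇒ Hom(T(-),A)` where `Hom(-,A)` is the contravariant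
hom-functor into `A`. -/
structure PredLifting (T : Type ⥤ Type) (A : Type) where
  app : ∀ S : Type, (S → A) → T.obj S → A
  naturality : ∀ {S S' : Type} (f : S → S') (X : S' → A),
    app S' X ∘ T.map (TypeCat.ofHom f) = app S (X ∘ f)

/-- The functor `T_P = EV_P × T`, where `EV_P` is the constant functor with value
`Hom(P,A)`. -/
def TP (P A : Type) (T : Type ⥤ Type) : Type ⥤ Type where
  obj S := (P → A) × T.obj S
  map f := TypeCat.ofHom fun x => (x.1, T.map f x.2)
  map_id X := by ext x <;> simp
  map_comp f g := by ext x <;> simp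

/-- Formulas of the many-valued coalgebraic modal language `ML`: constants `c̄` (`const`),
nullary modalities `◻_{λ^p}` (`prop`), binary connectives `∨, ∧, &, →`
(`or`, `and`, `conj`, `imp`), and unary modalities `◻_λ` (`box`), where `Λ` indexes
the predicate liftings. -/
inductive MLFormula (P A Λ : Type) : Type where
  | const : A → MLFormula P A Λ
  | prop : P → MLFormula P A Λ
  | or : MLFormula P A Λ → MLFormula P A Λ → MLFormula P A Λ
  | and : MLFormula P A Λ → MLFormula P A Λ → MLFormula P A Λ
  | conj : MLFormula P A Λ → MLFormula P A Λ → MLFormula P A Λ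
  | imp : MLFormula P A Λ → MLFormula P A Λ → MLFormula P A Λ
  | box : Λ → MLFormula P A Λ → MLFormula P A Λ

namespace MLFormula

/-- The modal rank of a formula: maximal nesting depth of unary modalities `◻_λ`.
`L_n` is the set of formulas of rank ≤ n. -/
def rank {P A Λ : Type} : MLFormula P A Λ → ℕ
  | const _ => 0
  | prop _ => 0
  | or φ ψ => max (rank φ) (rank ψ)
  | and φ ψ => max (rank φ) (rank ψ)
  | conj φ ψ => max (rank φ) (rank ψ)
  | imp φ ψ => max (rank φ) (rank ψ)
  | box _ φ => rank φ + 1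

/-- Application of a substitution `ρ : P → ML`, uniformly replacing each nullary
modality `◻_{λ^p}` by `ρ p`. -/
def subst {P A Λ : Type} (ρ : P → MLFormula P A Λ) : MLFormula P A Λ → MLFormula P A Λ
  | const c => const c
  | prop p => ρ p
  | or φ ψ => or (subst ρ φ) (subst ρ ψ)
  | and φ ψ => and (subst ρ φ) (subst ρ ψ)
  | conj φ ψ => conj (subst ρ φ) (subst ρ ψ)
  | imp φ ψ => imp (subst ρ φ) (subst ρ ψ)
  | box l φ => box l (subst ρ φ)

end MLFormula

/-- A `T`-model: a `T_P`-coalgebra `⟨S, σ_V⟩` where `σ_V s = (V s, σ s)` for a valuation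
`V : S → Hom(P,A)` and a `T`-coalgebra `σ : S → T S`. -/
structure TModel (T : Type ⥤ Type) (P A : Type) where
  S : Type
  V : S → P → A
  σ : S → T.obj S

variable {T : Type ⥤ Type} {P A Λ : Type}

/-- The semantics `‖φ‖_𝔠 : S → A` of a formula in a `T`-model, given an assignment
`lift` of predicate liftings to the modality indices in `Λ`. -/
def sem [FLAlgebra A] (lift : Λ → PredLifting T A) (M : TModel T P A) :
    MLFormula P A Λ → M.S → A
  | .const c, _ => c
  | .prop p, s => M.V s p
  | .or φ ψ, s => sem lift M φ s ⊔ sem lift M ψ s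
  | .and φ ψ, s => sem lift M φ s ⊓ sem lift M ψ s
  | .conj φ ψ, s => sem lift M φ s * sem lift M ψ s
  | .imp φ ψ, s => FLAlgebra.himp (sem lift M φ s) (sem lift M ψ s)
  | .box l φ, s => (lift l).app M.S (sem lift M φ) (M.σ s)

/-- The (pseudo-)terminal sequence: `T_P^0 1̃ = 1̃ = Hom(P,A) × 1` and
`T_P^{n+1} 1̃ = T_P (T_P^n 1̃)`. -/
def TPn (P A : Type) (T : Type ⥤ Type) : ℕ → Type :=
  Nat.rec ((P → A) × PUnit) (fun _ ih => (P → A) × T.obj ih)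

/-- `T_P^{n+1} 1̃` is (definitionally) `T_P` applied to `T_P^n 1̃`. -/
theorem TPn_succ (P A : Type) (T : Type ⥤ Type) (n : ℕ) :
    TPn P A T (n+1) = (TP P A T).obj (TPn P A T n) := rfl

/-- Every element of `T_P^n 1̃` has the form `⟨ν, δ⟩`; this extracts `ν : Hom(P,A)`. -/
def projV (P A : Type) (T : Type ⥤ Type) : (n : ℕ) → TPn P A T n → (P → A)
  | 0 => fun t => t.1
  | _+1 => fun t => t.1

/-- The `n`-step semantics `‖φ‖_n : T_P^n 1̃ → A` (well-behaved for `rank φ ≤ n`;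
the value of a box at level `0` is junk `1`). -/
def stepSem [FLAlgebra A] (lift : Λ → PredLifting T A) :
    MLFormula P A Λ → (n : ℕ) → TPn P A T n → A
  | .const c, _, _ => c
  | .prop p, n, t => projV P A T n t p
  | .or φ ψ, n, t => stepSem lift φ n t ⊔ stepSem lift ψ n t
  | .and φ ψ, n, t => stepSem lift φ n t ⊓ stepSem lift ψ n t
  | .conj φ ψ, n, t => stepSem lift φ n t * stepSem lift ψ n t
  | .imp φ ψ, n, t => FLAlgebra.himp (stepSem lift φ n t) (stepSem lift ψ n t)
  | .box l φ, n, t =>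
    (match (motive := (k : ℕ) → TPn P A T k → A) n with
      | 0 => fun _ => 1
      | m+1 => fun t => (lift l).app (TPn P A T m) (fun u => stepSem lift φ m u) t.2) t

/-- The maps `σ_k : S → T_P^k 1̃`: `σ_0 s = ⟨V s, •⟩` and `σ_{k+1} = T_P σ_k ∘ σ_V`. -/
def sigmaN (M : TModel T P A) : (k : ℕ) → M.S → TPn P A T k
  | 0 => fun s => (M.V s, PUnit.unit)
  | k+1 => fun s => (TP P A T).map (TypeCat.ofHom (sigmaN M k)) (M.V s, M.σ s)

/-- The canonical map `!'_{T_P^m 1̃} : T_P^m 1̃ → 1̃`, `⟨ν, δ⟩ ↦ ⟨ν, •⟩`. -/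
def bangTilde (P A : Type) (T : Type ⥤ Type) : (m : ℕ) → TPn P A T m → TPn P A T 0
  | 0 => fun t => (t.1, PUnit.unit)
  | _+1 => fun t => (t.1, PUnit.unit)

/-- `ι^n := T_P^n ι^0 : T_P^n 1̃ → T_P^{n+1} 1̃`, for a given `ι^0 : 1̃ → T_P 1̃`. -/
def iotaN (P A : Type) (T : Type ⥤ Type) (ι0 : TPn P A T 0 → TPn P A T 1) :
    (n : ℕ) → TPn P A T n → TPn P A T (n+1)
  | 0 => ι0
  | n+1 => ⇑((TP P A T).map (TypeCat.ofHom (iotaN P A T ι0 n)))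

/-- `ι^n_k : T_P^n 1̃ → T_P^k 1̃`: `ι^n_0 ⟨ν,δ⟩ = ⟨ν,•⟩` and
`ι^n_{k+1} = T_P ι^n_k ∘ ι^n`. -/
def iotaNK (P A : Type) (T : Type ⥤ Type) (ι0 : TPn P A T 0 → TPn P A T 1) (n : ℕ) :
    (k : ℕ) → TPn P A T n → TPn P A T k
  | 0 => bangTilde P A T n
  | k+1 => ⇑((TP P A T).map (TypeCat.ofHom (iotaNK P A T ι0 n k))) ∘ iotaN P A T ι0 n

/-- `T_P^k (!'_{T_P^m 1̃}) : T_P^{m+k} 1̃ → T_P^k 1̃`: the `k`-fold application of the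
functor `T_P` to the canonical map `!'_{T_P^m 1̃} : T_P^m 1̃ → 1̃`. -/
def liftedBang (P A : Type) (T : Type ⥤ Type) (m : ℕ) :
    (k : ℕ) → TPn P A T (m + k) → TPn P A T k
  | 0 => bangTilde P A T m
  | k+1 => ⇑((TP P A T).map (TypeCat.ofHom (liftedBang P A T m k)))

/-- The `T`-model `⟨T_P^n 1̃, ι^n⟩`. -/
def terminalModel (P A : Type) (T : Type ⥤ Type) (ι0 : TPn P A T 0 → TPn P A T 1)
    (n : ℕ) : TModel T P A where
  S := TPn P A T n
  V t := (iotaN P A T ι0 n t).1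
  σ t := (iotaN P A T ι0 n t).2

/-- Semantic consequence `Γ ⊩ φ` over all `T`-models. -/
def SemConseq [FLAlgebra A] (lift : Λ → PredLifting T A)
    (Γ : Set (MLFormula P A Λ)) (φ : MLFormula P A Λ) : Prop :=
  ∀ (M : TModel T P A) (s : M.S), (∀ γ ∈ Γ, sem lift M γ s = 1) → sem lift M φ s = 1

/-- Step-`n` semantic consequence `Γ ⊩_n φ` over the terminal sequence. -/
def StepConseq [FLAlgebra A] (lift : Λ → PredLifting T A) (n : ℕ)
    (Γ : Set (MLFormula P A Λ)) (φ : MLFormula P A Λ) : Prop :=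
  ∀ t : TPn P A T n, (∀ γ ∈ Γ, stepSem lift γ n t = 1) → stepSem lift φ n t = 1

/-- Image of a finite set of formulas under a map (with classical decidable equality). -/
noncomputable def fimg {α β : Type} (f : α → β) (s : Finset α) : Finset β :=
  @Finset.image _ _ (Classical.decEq β) f s

/-- The general consequence relation `L`: the least set of consecutions containing
`Ax(𝔸)`, all substitution instances of `Ax(Λ)`, and closed under the monotonicity
rule `Γ ⊢ φ ⟹ ◻_λΓ ⊢ ◻_λφ`. -/
inductive GenL (AxA AxL : Finset (MLFormula P A Λ) → MLFormula P A Λ → Prop) :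
    Finset (MLFormula P A Λ) → MLFormula P A Λ → Prop where
  | axA {Γ φ} : AxA Γ φ → GenL AxA AxL Γ φ
  | axL {Γ φ} (ρ : P → MLFormula P A Λ) : AxL Γ φ →
      GenL AxA AxL (fimg (MLFormula.subst ρ) Γ) (MLFormula.subst ρ φ)
  | mono {Γ φ} (l : Λ) : GenL AxA AxL Γ φ →
      GenL AxA AxL (fimg (MLFormula.box l) Γ) (MLFormula.box l φ)

/-- The step-`n` consequence relations `L_n`: `L_0` is `Ax(𝔸)`-derivability restricted to
rank-0 consecutions; `L_{n+1}` is the least set of consecutions among `L_{n+1}`-formulas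
containing `Ax(𝔸)`-derivations, `n`-substitution instances of `Ax(Λ)`, and closed under
`Γ ⊢_{L_n} φ ⟹ ◻_λΓ ⊢_{L_{n+1}} ◻_λφ`. -/
inductive StepL (AxA AxL : Finset (MLFormula P A Λ) → MLFormula P A Λ → Prop) :
    ℕ → Finset (MLFormula P A Λ) → MLFormula P A Λ → Prop where
  | axA {n Γ φ} : (∀ γ ∈ Γ, MLFormula.rank γ ≤ n) → MLFormula.rank φ ≤ n →
      AxA Γ φ → StepL AxA AxL n Γ φ
  | axL {n Γ φ} (ρ : P → MLFormula P A Λ) : (∀ p, MLFormula.rank (ρ p) ≤ n) →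
      AxL Γ φ →
      StepL AxA AxL (n+1) (fimg (MLFormula.subst ρ) Γ) (MLFormula.subst ρ φ)
  | mono {n Γ φ} (l : Λ) : StepL AxA AxL n Γ φ →
      StepL AxA AxL (n+1) (fimg (MLFormula.box l) Γ) (MLFormula.box l φ)

/-- The `α`-cut of an `A`-valued fuzzy subset `f : X → A`. -/
def alphaCut {A : Type} [FLAlgebra A] {X : Type} (f : X → A) (α : A) : Set X :=
  {x | α ≤ f x}

/-- `F ⊑_α G` for families of `A`-valued fuzzy subsets of the same universe. -/
def famLe {A : Type} [FLAlgebra A] {X : Type} (F G : Set (X → A)) (α : A) : Prop :=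
  (⋂ f ∈ F, alphaCut f α) ⊆ ⋃ g ∈ G, alphaCut g α

/-- A predicate lifting is `α`-preserving if it preserves `⊑_α` between families of
fuzzy subsets. -/
def preservesAt [FLAlgebra A] (lam : PredLifting T A) (α : A) : Prop :=
  ∀ (S : Type) (F G : Set (S → A)), famLe F G α →
    famLe ((fun f => lam.app S f) '' F) ((fun f => lam.app S f) '' G) α

/-- `⊢_{L_n}` is sound w.r.t. `⊩_n`: for finite `Γ ∪ {φ} ⊆ L_n`, `Γ ⊢_{L_n} φ`
implies `Γ ⊩_n φ`. -/
def SoundAt [FLAlgebra A] (lift : Λ → PredLifting T A)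
    (AxA AxL : Finset (MLFormula P A Λ) → MLFormula P A Λ → Prop) (n : ℕ) : Prop :=
  ∀ (Γ : Finset (MLFormula P A Λ)) (φ : MLFormula P A Λ),
    (∀ γ ∈ Γ, MLFormula.rank γ ≤ n) → MLFormula.rank φ ≤ n →
    StepL AxA AxL n Γ φ → StepConseq lift n ↑Γ φ

/-- `⊢_{L_n}` is complete w.r.t. `⊩_n`: for finite `Γ ∪ {φ} ⊆ L_n`, `Γ ⊩_n φ`
implies `Γ ⊢_{L_n} φ`. -/
def CompleteAt [FLAlgebra A] (lift : Λ → PredLifting T A)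
    (AxA AxL : Finset (MLFormula P A Λ) → MLFormula P A Λ → Prop) (n : ℕ) : Prop :=
  ∀ (Γ : Finset (MLFormula P A Λ)) (φ : MLFormula P A Λ),
    (∀ γ ∈ Γ, MLFormula.rank γ ≤ n) → MLFormula.rank φ ≤ n →
    StepConseq lift n ↑Γ φ → StepL AxA AxL n Γ φ

/-- `⊢_L` is one-step sound: for every `n > 0`, soundness of `⊢_{L_{n-1}}` w.r.t.
`⊩_{n-1}` implies soundness of `⊢_{L_n}` w.r.t. `⊩_n`. -/
def OneStepSound [FLAlgebra A] (lift : Λ → PredLifting T A)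
    (AxA AxL : Finset (MLFormula P A Λ) → MLFormula P A Λ → Prop) : Prop :=
  ∀ n : ℕ, SoundAt lift AxA AxL n → SoundAt lift AxA AxL (n+1)

/-- `⊢_L` is one-step complete: for every `n > 0`, completeness of `⊢_{L_{n-1}}` w.r.t.
`⊩_{n-1}` implies completeness of `⊢_{L_n}` w.r.t. `⊩_n`. -/
def OneStepComplete [FLAlgebra A] (lift : Λ → PredLifting T A)
    (AxA AxL : Finset (MLFormula P A Λ) → MLFormula P A Λ → Prop) : Prop :=
  ∀ n : ℕ, CompleteAt lift AxA AxL n → CompleteAt lift AxA AxL (n+1)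

namespace MLFormula

/-- The largest rank of `ρ p` over the symbols `p` occurring in the formula. -/
def substVarRank (ρ : P → MLFormula P A Λ) : MLFormula P A Λ → ℕ
  | const _ => 0
  | prop p => (ρ p).rank
  | or φ ψ | and φ ψ | conj φ ψ | imp φ ψ => max (substVarRank ρ φ) (substVarRank ρ ψ)
  | box _ φ => substVarRank ρ φ

def truncSubst (ρ : P → MLFormula P A Λ) (N : ℕ) (p : P) : MLFormula P A Λ :=
  if (ρ p).rank ≤ N then ρ p else prop p

theorem rank_truncSubst_le (ρ : P → MLFormula P A Λ) (N : ℕ) (p : P) :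
    (truncSubst ρ N p).rank ≤ N := by
  unfold truncSubst
  split_ifs with h
  · exact h
  · exact Nat.zero_le N

theorem subst_truncSubst (ρ : P → MLFormula P A Λ) {N : ℕ} {φ : MLFormula P A Λ}
    (h : φ.substVarRank ρ ≤ N) : φ.subst (truncSubst ρ N) = φ.subst ρ := by
  induction φ with
  | const c => rfl
  | prop p => exact if_pos h
  | box l φ ih => exact congrArg (box l) (ih h)
  | or φ ψ ihφ ihψ | and φ ψ ihφ ihψ | conj φ ψ ihφ ihψ | imp φ ψ ihφ ihψ =>
    rw [substVarRank, max_le_iff] at h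
    simp only [subst, ihφ h.1, ihψ h.2]

theorem rank_subst_le {ρ : P → MLFormula P A Λ} {n : ℕ} (hρ : ∀ p, (ρ p).rank ≤ n)
    (φ : MLFormula P A Λ) : (φ.subst ρ).rank ≤ φ.rank + n := by
  induction φ with
  | const c => exact Nat.zero_le _
  | prop p => simpa [subst, rank] using hρ p
  | box l φ ih => simp only [subst, rank]; omega
  | or φ ψ ihφ ihψ | and φ ψ ihφ ihψ | conj φ ψ ihφ ihψ | imp φ ψ ihφ ihψ =>
    simp only [subst, rank]; omega

end MLFormula

theorem mem_fimg {α β : Type} {f : α → β} {s : Finset α} {b : β} :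
    b ∈ fimg f s ↔ ∃ a ∈ s, f a = b :=
  @Finset.mem_image _ _ (Classical.decEq β) f s b

theorem fimg_congr {α β : Type} {f g : α → β} {s : Finset α} (h : ∀ a ∈ s, f a = g a) :
    fimg f s = fimg g s :=
  @Finset.image_congr _ _ (Classical.decEq β) f g s h

theorem StepL.rank_le {AxA AxL : Finset (MLFormula P A Λ) → MLFormula P A Λ → Prop}
    (hAxL : ∀ Γ φ, AxL Γ φ → (∀ γ ∈ Γ, γ.rank ≤ 1) ∧ φ.rank ≤ 1)
    {n : ℕ} {Γ : Finset (MLFormula P A Λ)} {φ : MLFormula P A Λ}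
    (h : StepL AxA AxL n Γ φ) : (∀ γ ∈ Γ, γ.rank ≤ n) ∧ φ.rank ≤ n := by
  induction h with
  | axA hΓ hφ _ => exact ⟨hΓ, hφ⟩
  | @axL n Γ φ ρ hρ hax =>
    obtain ⟨hΓ, hφ⟩ := hAxL Γ φ hax
    have hsubst : ∀ ψ : MLFormula P A Λ, ψ.rank ≤ 1 → (ψ.subst ρ).rank ≤ n + 1 :=
      fun ψ hψ => by have := MLFormula.rank_subst_le hρ ψ; omega
    refine ⟨fun γ' hγ' => ?_, hsubst φ hφ⟩
    obtain ⟨γ, hγ, rfl⟩ := mem_fimg.1 hγ'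
    exact hsubst γ (hΓ γ hγ)
  | mono l _ ih =>
    refine ⟨fun γ' hγ' => ?_, Nat.succ_le_succ ih.2⟩
    obtain ⟨γ, hγ, rfl⟩ := mem_fimg.1 hγ'
    exact Nat.succ_le_succ (ih.1 γ hγ)

theorem GenL.exists_stepL {AxA AxL : Finset (MLFormula P A Λ) → MLFormula P A Λ → Prop}
    {Γ : Finset (MLFormula P A Λ)} {φ : MLFormula P A Λ}
    (h : GenL AxA AxL Γ φ) : ∃ n, StepL AxA AxL n Γ φ := by
  induction h with
  | @axA Γ φ hax =>
    exact ⟨Γ.sup MLFormula.rank ⊔ φ.rank,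
      .axA (fun γ hγ => le_sup_of_le_left (Finset.le_sup hγ)) le_sup_right hax⟩
  | @axL Γ φ ρ hax =>
    -- `StepL.axL` bounds the rank of `ρ p` for every `p`, so `ρ` is first truncated
    -- to the finitely many symbols occurring in the consecution.
    set N := Γ.sup (MLFormula.substVarRank ρ) ⊔ φ.substVarRank ρ
    have hφ : φ.subst (MLFormula.truncSubst ρ N) = φ.subst ρ :=
      MLFormula.subst_truncSubst ρ le_sup_right
    have hΓ : fimg (MLFormula.subst (MLFormula.truncSubst ρ N)) Γ = fimg (MLFormula.subst ρ) Γ :=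
      fimg_congr fun γ hγ =>
        MLFormula.subst_truncSubst ρ (le_sup_of_le_left (Finset.le_sup hγ))
    refine ⟨N + 1, ?_⟩
    rw [← hφ, ← hΓ]
    exact .axL _ (MLFormula.rank_truncSubst_le ρ N) hax
  | mono l _ ih =>
    obtain ⟨n, hn⟩ := ih
    exact ⟨n + 1, .mono l hn⟩

theorem sem_eq_stepSem_sigmaN [FLAlgebra A] (lift : Λ → PredLifting T A) (M : TModel T P A)
    {φ : MLFormula P A Λ} {n : ℕ} (hφ : φ.rank ≤ n) (s : M.S) :
    sem lift M φ s = stepSem lift φ n (sigmaN M n s) := by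
  induction φ generalizing n s with
  | const c => rfl
  | prop p => cases n <;> rfl
  | box l φ ih =>
    obtain ⟨m, rfl⟩ := Nat.exists_eq_add_of_le' (Nat.le_of_add_left_le hφ)
    have hφm : φ.rank ≤ m := Nat.le_of_succ_le_succ hφ
    calc (lift l).app M.S (sem lift M φ) (M.σ s)
        = (lift l).app M.S (stepSem lift φ m ∘ sigmaN M m) (M.σ s) := by
          congr 1; funext s'; exact ih hφm s'
      _ = (lift l).app (TPn P A T m) (stepSem lift φ m)
            (T.map (TypeCat.ofHom (sigmaN M m)) (M.σ s)) :=
          (congrFun ((lift l).naturality (sigmaN M m) (stepSem lift φ m)) (M.σ s)).symm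
  | or φ ψ ihφ ihψ | and φ ψ ihφ ihψ | conj φ ψ ihφ ihψ | imp φ ψ ihφ ihψ =>
    rw [MLFormula.rank, max_le_iff] at hφ
    simp only [sem, stepSem, ihφ hφ.1 s, ihψ hφ.2 s]

theorem OneStepSound.soundAt [FLAlgebra A] {lift : Λ → PredLifting T A}
    {AxA AxL : Finset (MLFormula P A Λ) → MLFormula P A Λ → Prop}
    (hone : OneStepSound lift AxA AxL) (h0 : SoundAt lift AxA AxL 0) (n : ℕ) :
    SoundAt lift AxA AxL n :=
  Nat.rec h0 hone n

theorem genL_sound_general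
    {T : Type ⥤ Type} {P A Λ : Type} [FLAlgebra A]
    (lift : Λ → PredLifting T A)
    (AxA AxL : Finset (MLFormula P A Λ) → MLFormula P A Λ → Prop)
    (hAxL : ∀ Γ φ, AxL Γ φ →
      (∀ γ ∈ Γ, MLFormula.rank γ ≤ 1) ∧ MLFormula.rank φ ≤ 1)
    (h0sound : SoundAt lift AxA AxL 0)
    (hone : OneStepSound lift AxA AxL) :
    ∀ (Γ : Finset (MLFormula P A Λ)) (φ : MLFormula P A Λ),
      GenL AxA AxL Γ φ → SemConseq lift ↑Γ φ := by
  intro Γ φ hL M s hΓ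
  obtain ⟨n, hstep⟩ := hL.exists_stepL
  obtain ⟨hΓn, hφn⟩ := hstep.rank_le hAxL
  rw [sem_eq_stepSem_sigmaN lift M hφn]
  refine hone.soundAt h0sound n Γ φ hΓn hφn hstep (sigmaN M n s) fun γ hγ => ?_
  rw [← sem_eq_stepSem_sigmaN lift M (hΓn γ hγ)]
  exact hΓ γ hγ

/-- If the general consequence relation `⊢_L` is one-step sound (and
`Ax(𝔸)` is sound and complete), then `⊢_L` is sound w.r.t. the semantic consequence
relation `⊩`: for every finite `Γ ∪ {φ} ⊆ ML`, `Γ ⊢_L φ` implies `Γ ⊩ φ`. -/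
theorem genL_sound
    {T : Type ⥤ Type} {P A Λ : Type} [FLAlgebra A]
    (lift : Λ → PredLifting T A)
    (hT : ∃ S : Type, Nonempty (T.obj S))
    (AxA AxL : Finset (MLFormula P A Λ) → MLFormula P A Λ → Prop)
    (hAxL : ∀ Γ φ, AxL Γ φ →
      (∀ γ ∈ Γ, MLFormula.rank γ ≤ 1) ∧ MLFormula.rank φ ≤ 1)
    (h0sound : SoundAt lift AxA AxL 0)
    (h0complete : CompleteAt lift AxA AxL 0)
    (hone : OneStepSound lift AxA AxL) :
    ∀ (Γ : Finset (MLFormula P A Λ)) (φ : MLFormula P A Λ),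
      GenL AxA AxL Γ φ → SemConseq lift ↑Γ φ :=
  genL_sound_general lift AxA AxL hAxL h0sound hone
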